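/- Let n ≥ 1 be an integer, q > 0 a real number, C ≥ 0 a real constant, and u : ℝⁿ → ℝ a continuous nonnegative function. Suppose that for every compactly supported C¹ function g : ℝⁿ → ℝ one has ∫ u^{2q+4} g² ≤ C ∫ u^{2q+2} ‖∇g‖² (Lebesgue integrals over ℝⁿ). Then for every compactly supported smooth nonnegative function f : ℝⁿ → ℝ, ∫ u^{2(q+2)} f^{2(q+1)} ≤ (C (q+1)²)^{q+1} ∫ u² ‖∇f‖^{2(q+1)}. -/

import Mathlib

open MeasureTheory

/-- The iteration step in the proof of Theorem 1.2 of the paper: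
from the Caccioppoli-type inequality (3.5) for all compactly supported `C¹`
test functions, substituting `f^{q+1}` and applying Hölder's inequality yields
the stated inequality for smooth compactly supported nonnegative `f`. -/
theorem caccioppoli_iteration (n : ℕ) (hn : 1 ≤ n) (q : ℝ) (hq : 0 < q)
    (C : ℝ) (hC : 0 ≤ C)
    (u : EuclideanSpace ℝ (Fin n) → ℝ) (hu : Continuous u)
    (hunn : ∀ x, 0 ≤ u x)
    (hineq : ∀ g : EuclideanSpace ℝ (Fin n) → ℝ,
      HasCompactSupport g → ContDiff ℝ 1 g →
      (∫ x, u x ^ (2 * q + 4) * g x ^ 2) ≤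
        C * ∫ x, u x ^ (2 * q + 2) * ‖gradient g x‖ ^ 2) :
    ∀ f : EuclideanSpace ℝ (Fin n) → ℝ,
      HasCompactSupport f → ContDiff ℝ (⊤ : ℕ∞) f → (∀ x, 0 ≤ f x) →
      (∫ x, u x ^ (2 * (q + 2)) * f x ^ (2 * (q + 1))) ≤
        (C * (q + 1) ^ 2) ^ (q + 1) *
          ∫ x, u x ^ 2 * ‖gradient f x‖ ^ (2 * (q + 1)) := by
  intro f hfc hfs hfnn
  have hq1 : (0:ℝ) < q + 1 := by linarith
  have hq1' : q + 1 ≠ 0 := hq1.ne'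
  -- the test function g = f^(q+1)
  set g : EuclideanSpace ℝ (Fin n) → ℝ := fun x => f x ^ (q + 1) with hgdef
  have hgc : HasCompactSupport g := by
    have : HasCompactSupport ((fun t : ℝ => t ^ (q + 1)) ∘ f) :=
      hfc.comp_left (by simp [Real.zero_rpow hq1'])
    exact this
  have hf1 : ContDiff ℝ 1 f := hfs.of_le (by simp)
  have hgs : ContDiff ℝ 1 g := by
    have h1 : ContDiff ℝ 1 (fun t : ℝ => t ^ (q + 1)) :=
      Real.contDiff_rpow_const_of_le (by norm_num; linarith)
    exact h1.comp hf1
  -- differentiability facts about f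
  have hdf : ∀ x, DifferentiableAt ℝ f x := fun x =>
    (hf1.differentiable one_ne_zero).differentiableAt
  -- gradient of g
  have hgrad : ∀ x, gradient g x = ((q + 1) * f x ^ q) • gradient f x := by
    intro x
    have h1 : HasGradientAt f (gradient f x) x := (hdf x).hasGradientAt
    have h2 : HasDerivAt (fun t : ℝ => t ^ (q + 1)) ((q + 1) * f x ^ (q + 1 - 1)) (f x) :=
      Real.hasDerivAt_rpow_const (Or.inr (by linarith))
    have h3 : HasFDerivAt g
        (((q + 1) * f x ^ (q + 1 - 1)) •
          (InnerProductSpace.toDual ℝ _ (gradient f x))) x :=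
      h2.comp_hasFDerivAt x h1.hasFDerivAt
    rw [← _root_.map_smul] at h3
    have h4 : HasGradientAt g (((q + 1) * f x ^ (q + 1 - 1)) • gradient f x) x :=
      hasGradientAt_iff_hasFDerivAt.2 h3
    simpa using h4.gradient
  have hnormg : ∀ x, ‖gradient g x‖ = (q + 1) * f x ^ q * ‖gradient f x‖ := by
    intro x
    rw [hgrad x, norm_smul, Real.norm_eq_abs,
      abs_of_nonneg (mul_nonneg hq1.le (Real.rpow_nonneg (hfnn x) q))]
  -- continuity of gradient f
  have hgradf_cont : Continuous fun x => gradient f x := by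
    have : Continuous (fderiv ℝ f) := hf1.continuous_fderiv one_ne_zero
    exact (InnerProductSpace.toDual ℝ _).symm.continuous.comp this
  -- support of gradient f
  have hgradf_supp : Function.support (fun x => gradient f x) ⊆ tsupport f := by
    intro x hx
    by_contra hxt
    apply hx
    have h0 : fderiv ℝ f x = 0 := by
      by_contra h0
      exact hxt (support_fderiv_subset (𝕜 := ℝ) h0)
    show gradient f x = 0
    rw [show gradient f x = (InnerProductSpace.toDual ℝ _).symm (fderiv ℝ f x) from rfl, h0,
      map_zero]
  -- abbreviations
  set A : ℝ := ∫ x, u x ^ (2 * (q + 2)) * f x ^ (2 * (q + 1)) with hA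
  set B : ℝ := ∫ x, u x ^ 2 * ‖gradient f x‖ ^ (2 * (q + 1)) with hB
  set D : ℝ := ∫ x, u x ^ (2 * q + 2) * (f x ^ (2 * q) * ‖gradient f x‖ ^ 2) with hD
  have hAnn : 0 ≤ A := by
    apply integral_nonneg; intro x
    exact mul_nonneg (Real.rpow_nonneg (hunn x) _) (Real.rpow_nonneg (hfnn x) _)
  have hBnn : 0 ≤ B := by
    apply integral_nonneg; intro x
    exact mul_nonneg (by positivity) (Real.rpow_nonneg (norm_nonneg _) _)
  -- Step 1 : A ≤ C * (q+1)^2 * D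
  have step1 : A ≤ C * ((q + 1) ^ 2 * D) := by
    have h0 := hineq g hgc hgs
    have hL : (∫ x, u x ^ (2 * q + 4) * g x ^ 2) = A := by
      apply integral_congr_ae; apply Filter.Eventually.of_forall; intro x; dsimp only
      have e1 : g x ^ 2 = f x ^ (2 * (q + 1)) := by
        show (f x ^ (q + 1)) ^ (2:ℕ) = _
        rw [← Real.rpow_natCast (f x ^ (q + 1)) 2, ← Real.rpow_mul (hfnn x)]
        norm_num [mul_comm]
      have e2 : u x ^ (2 * q + 4) = u x ^ (2 * (q + 2)) := by ring_nf
      rw [e1, e2]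
    have hR : (∫ x, u x ^ (2 * q + 2) * ‖gradient g x‖ ^ 2)
        = (q + 1) ^ 2 * D := by
      rw [hD, ← integral_const_mul]
      apply integral_congr_ae; apply Filter.Eventually.of_forall; intro x; dsimp only
      rw [hnormg x]
      have e1 : (f x ^ q) ^ (2:ℕ) = f x ^ (2 * q) := by
        rw [← Real.rpow_natCast (f x ^ q) 2, ← Real.rpow_mul (hfnn x)]
        norm_num [mul_comm]
      rw [mul_pow, mul_pow, e1]; ring
    rw [hL, hR] at h0
    exact h0
  -- Hölder's inequality setup
  set F : EuclideanSpace ℝ (Fin n) → ℝ :=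
    fun x => (u x ^ (2 * (q + 2)) * f x ^ (2 * (q + 1))) ^ (q / (q + 1)) with hF
  set G : EuclideanSpace ℝ (Fin n) → ℝ :=
    fun x => (u x ^ 2 * ‖gradient f x‖ ^ (2 * (q + 1))) ^ (1 / (q + 1)) with hG
  have hpq : Real.HolderConjugate ((q + 1) / q) (q + 1) := by
    rw [Real.holderConjugate_iff]; constructor
    · rw [lt_div_iff₀ hq]; linarith
    · rw [inv_div]; field_simp
  have hFcont : Continuous F := by
    apply Continuous.rpow_const
    · exact (hu.rpow_const fun x => Or.inr (by positivity)).mul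
        ((hfs.continuous).rpow_const fun x => Or.inr (by positivity))
    · intro x; exact Or.inr (by positivity)
  have hGcont : Continuous G := by
    apply Continuous.rpow_const
    · exact (hu.pow 2).mul
        ((hgradf_cont.norm).rpow_const fun x => Or.inr (by positivity))
    · intro x; exact Or.inr (by positivity)
  have hFsupp : HasCompactSupport F := by
    apply hfc.mono'
    intro x hx
    apply subset_tsupport f
    intro hfx
    apply hx
    simp only [hF, hfx, Real.zero_rpow (by positivity : 2 * (q + 1) ≠ 0), mul_zero]
    exact Real.zero_rpow (by positivity : q / (q + 1) ≠ 0)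
  have hGsupp : HasCompactSupport G := by
    apply hfc.mono'
    intro x hx
    by_contra hxt
    apply hx
    have h0 : gradient f x = 0 := by
      by_contra h0; exact hxt (hgradf_supp h0)
    simp only [hG, h0, norm_zero, Real.zero_rpow (by positivity : 2 * (q + 1) ≠ 0), mul_zero]
    exact Real.zero_rpow (by positivity : 1 / (q + 1) ≠ 0)
  have hFnn : ∀ x, 0 ≤ F x := fun x => Real.rpow_nonneg
    (mul_nonneg (Real.rpow_nonneg (hunn x) _) (Real.rpow_nonneg (hfnn x) _)) _
  have hGnn : ∀ x, 0 ≤ G x := fun x => Real.rpow_nonneg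
    (mul_nonneg (by positivity) (Real.rpow_nonneg (norm_nonneg _) _)) _
  have holder := integral_mul_le_Lp_mul_Lq_of_nonneg hpq
    (Filter.Eventually.of_forall hFnn) (Filter.Eventually.of_forall hGnn)
    (hFcont.memLp_of_hasCompactSupport (μ := volume) hFsupp)
    (hGcont.memLp_of_hasCompactSupport (μ := volume) hGsupp)
  -- identify the three integrals in Hölder's inequality
  have hFG : (∫ x, F x * G x) = D := by
    apply integral_congr_ae; apply Filter.Eventually.of_forall; intro x; dsimp only
    simp only [hF, hG]
    rcases eq_or_lt_of_le (hunn x) with hux | hux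
    · rw [← hux, Real.zero_rpow (by positivity : 2 * (q + 2) ≠ 0),
        Real.zero_rpow (by positivity : 2 * q + 2 ≠ 0), zero_mul,
        Real.zero_rpow (by positivity : q / (q + 1) ≠ 0), zero_mul, zero_mul]
    rcases eq_or_lt_of_le (hfnn x) with hfx | hfx
    · rw [← hfx, Real.zero_rpow (by positivity : 2 * (q + 1) ≠ 0),
        Real.zero_rpow (by positivity : 2 * q ≠ 0), mul_zero,
        Real.zero_rpow (by positivity : q / (q + 1) ≠ 0), zero_mul, zero_mul, mul_zero]
    rcases eq_or_lt_of_le (norm_nonneg (gradient f x)) with hcx | hcx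
    · rw [← hcx, Real.zero_rpow (by positivity : 2 * (q + 1) ≠ 0), mul_zero,
        Real.zero_rpow (by positivity : 1 / (q + 1) ≠ 0), mul_zero]
      rw [show (0:ℝ) ^ (2:ℕ) = 0 by norm_num, mul_zero, mul_zero]
    · -- all bases positive: compare logarithms
      have hLpos : 0 < (u x ^ (2 * (q + 2)) * f x ^ (2 * (q + 1))) ^ (q / (q + 1)) *
          (u x ^ 2 * ‖gradient f x‖ ^ (2 * (q + 1))) ^ (1 / (q + 1)) := by positivity
      have hRpos : 0 < u x ^ (2 * q + 2) * (f x ^ (2 * q) * ‖gradient f x‖ ^ 2) := by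
        positivity
      apply Real.log_injOn_pos (Set.mem_Ioi.2 hLpos) (Set.mem_Ioi.2 hRpos)
      rw [Real.log_mul (by positivity) (by positivity),
        Real.log_rpow (by positivity), Real.log_rpow (by positivity),
        Real.log_mul (by positivity) (by positivity),
        Real.log_mul (by positivity) (by positivity),
        Real.log_mul (by positivity) (by positivity),
        Real.log_mul (by positivity) (by positivity),
        Real.log_rpow hux, Real.log_rpow hfx, Real.log_pow,
        Real.log_rpow hcx, Real.log_rpow hux, Real.log_rpow hfx, Real.log_pow]
      field_simp
      ring
  have hFp : (∫ x, F x ^ ((q + 1) / q)) = A := by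
    apply integral_congr_ae; apply Filter.Eventually.of_forall; intro x; dsimp only
    simp only [hF]
    rw [← Real.rpow_mul
      (mul_nonneg (Real.rpow_nonneg (hunn x) _) (Real.rpow_nonneg (hfnn x) _)),
      show q / (q + 1) * ((q + 1) / q) = 1 by field_simp, Real.rpow_one]
  have hGq : (∫ x, G x ^ (q + 1)) = B := by
    apply integral_congr_ae; apply Filter.Eventually.of_forall; intro x; dsimp only
    simp only [hG]
    rw [← Real.rpow_mul
      (mul_nonneg (by positivity) (Real.rpow_nonneg (norm_nonneg _) _)),
      show 1 / (q + 1) * (q + 1) = 1 by field_simp, Real.rpow_one]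
  rw [hFG, hFp, hGq, show 1 / ((q + 1) / q) = q / (q + 1) by rw [one_div_div]] at holder
  -- combine
  have step2 : A ≤ C * (q + 1) ^ 2 * (A ^ (q / (q + 1)) * B ^ (1 / (q + 1))) := by
    calc A ≤ C * ((q + 1) ^ 2 * D) := step1
      _ = C * (q + 1) ^ 2 * D := by ring
      _ ≤ C * (q + 1) ^ 2 * (A ^ (q / (q + 1)) * B ^ (1 / (q + 1))) := by
          apply mul_le_mul_of_nonneg_left holder (by positivity)
  rcases eq_or_lt_of_le hAnn with hA0 | hA0
  · rw [← hA0]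
    exact mul_nonneg (Real.rpow_nonneg (by positivity) _) hBnn
  · -- A > 0 : divide and raise to the power (q+1)
    have key : A ^ (1 / (q + 1)) ≤ C * (q + 1) ^ 2 * B ^ (1 / (q + 1)) := by
      have hsplit : A = A ^ (q / (q + 1)) * A ^ (1 / (q + 1)) := by
        rw [← Real.rpow_add hA0, show q / (q + 1) + 1 / (q + 1) = 1 by field_simp,
          Real.rpow_one]
      have hApow : 0 < A ^ (q / (q + 1)) := Real.rpow_pos_of_pos hA0 _
      have := step2
      nth_rewrite 1 [hsplit] at this
      have h2 : A ^ (q / (q + 1)) * A ^ (1 / (q + 1)) ≤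
          A ^ (q / (q + 1)) * (C * (q + 1) ^ 2 * B ^ (1 / (q + 1))) := by
        calc A ^ (q / (q + 1)) * A ^ (1 / (q + 1)) ≤
            C * (q + 1) ^ 2 * (A ^ (q / (q + 1)) * B ^ (1 / (q + 1))) := this
          _ = A ^ (q / (q + 1)) * (C * (q + 1) ^ 2 * B ^ (1 / (q + 1))) := by ring
      exact le_of_mul_le_mul_left h2 hApow
    have hfinal : A ≤ (C * (q + 1) ^ 2) ^ (q + 1) * B := by
      have h3 : (A ^ (1 / (q + 1))) ^ (q + 1) ≤
          (C * (q + 1) ^ 2 * B ^ (1 / (q + 1))) ^ (q + 1) :=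
        Real.rpow_le_rpow (Real.rpow_nonneg hAnn _) key hq1.le
      rw [← Real.rpow_mul hAnn, show 1 / (q + 1) * (q + 1) = 1 by field_simp,
        Real.rpow_one,
        Real.mul_rpow (by positivity) (Real.rpow_nonneg hBnn _),
        ← Real.rpow_mul hBnn, show 1 / (q + 1) * (q + 1) = 1 by field_simp,
        Real.rpow_one] at h3
      exact h3
    exact hfinal
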